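/- Let d ≥ 2, 1 ≤ m ≤ d−1, write x = (x', x'') ∈ ℝ^m × ℝ^{d−m}. Let v : ℝ^d → ℝ^d, p_v : ℝ^d → ℝ be smooth, supported in the closed unit ball, with (v·∇)v + ∇p_v = 0 and div v = 0. Fix S ∈ ℕ, ε ∈ (0,1), k ≥ 1, J ≥ 1; set v_k(x) := ε^{(S+1)(k-1)} v(ε^{-k}x), p_k(x) := ε^{2(S+1)(k-1)} p_v(ε^{-k}x). Let y_{1},…,y_{J} ∈ ℝ^m be points such that the images in (ℝ/2πℤ)^m of the closed balls B̄(y_j, 2ε^k) ⊂ ℝ^m are pairwise disjoint, let ν_1,…,ν_J ∈ ℝ^{d−m}, and let χ : ℝ → [0,1] be smooth, even, with χ = 1 on (−ε^k, ε^k) and χ = 0 outside (−2ε^k, 2ε^k). Define, for (t,x) ∈ ℝ × ℝ^d: v̄_j(t,x) := Σ_{q∈ℤ^d} v_k((x'−y_j, x''−ν_j t) + 2πq), p̄_j(t,x) := Σ_{q∈ℤ^d} p_k((x'−y_j, x''−ν_j t) + 2πq), w(x) := (0, Σ_{j=1}^J ν_j χ(dist_{T^m}(x', y_j))), u(t,x)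 := Σ_{j=1}^J v̄_j(t,x) + w(x), P(t,x) := Σ_{j=1}^J p̄_j(t,x). Then u(t,·) and P(t,·) are smooth and 2πℤ^d-periodic for each t, div_x u = 0, and ∂_t u + (u·∇)u + ∇_x P = 0 on ℝ × ℝ^d; moreover for each t the supports of u(t,·) − w and of P(t,·) in one fundamental domain are contained in ⋃_{j=1}^J B̄(y_j, 2ε^k) × ℝ^{d−m} (modulo 2πℤ^d). -/

import Mathlib

noncomputable section

/-- `ℝ^d` with `d = m + n`, written as the Euclidean space over `Fin m ⊕ Fin n`;
the splitting `x = (x', x'') ∈ ℝ^m × ℝ^{d-m}` is by the two summands. -/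
abbrev Sp (m n : ℕ) := EuclideanSpace ℝ (Fin m ⊕ Fin n)

/-- The point `(a, b) ∈ ℝ^m × ℝ^{d-m} = ℝ^d`. -/
def pair (m n : ℕ) (a : Fin m → ℝ) (b : Fin n → ℝ) : Sp m n :=
  (EuclideanSpace.equiv (Fin m ⊕ Fin n) ℝ).symm (Sum.elim a b)

/-- The first group `x'` of coordinates of `x ∈ ℝ^d = ℝ^m × ℝ^{d-m}`. -/
def fst' (m n : ℕ) (x : Sp m n) : Fin m → ℝ := fun i => x (Sum.inl i)

/-- The lattice vector `2πq ∈ 2πℤ^d`, viewed as a point of `ℝ^d`. -/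
def lat (m n : ℕ) (q : Fin m ⊕ Fin n → ℤ) : Sp m n :=
  (EuclideanSpace.equiv (Fin m ⊕ Fin n) ℝ).symm (fun s => 2 * Real.pi * (q s : ℝ))

/-- Distance on the torus `T^m = (ℝ/2πℤ)^m` (quotient of the Euclidean metric on `ℝ^m`)
between the classes of `a, b ∈ ℝ^m`; it decouples coordinatewise. -/
def distT (m : ℕ) (a b : Fin m → ℝ) : ℝ :=
  Real.sqrt (∑ i, dist ((a i : AddCircle (2 * Real.pi))) ((b i : AddCircle (2 * Real.pi))) ^ 2)

/-- The convective derivative `(f·∇)g`, whose `i`-th component is `Σ_j f_j ∂_{x_j} g_i`. -/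
def conv {ι : Type*} [Fintype ι] [DecidableEq ι]
    (f g : EuclideanSpace ℝ ι → EuclideanSpace ℝ ι) (x : EuclideanSpace ℝ ι) :
    EuclideanSpace ℝ ι :=
  ∑ j, f x j • fderiv ℝ g x (EuclideanSpace.single j 1)

/-- The divergence `div f = Σ_j ∂_{x_j} f_j`. -/
def diverg {ι : Type*} [Fintype ι] [DecidableEq ι]
    (f : EuclideanSpace ℝ ι → EuclideanSpace ℝ ι) (x : EuclideanSpace ℝ ι) : ℝ :=
  ∑ j, fderiv ℝ f x (EuclideanSpace.single j 1) j

/-- The gradient `∇p` of a scalar function. -/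
def grad {ι : Type*} [Fintype ι] [DecidableEq ι] (p : EuclideanSpace ℝ ι → ℝ)
    (x : EuclideanSpace ℝ ι) : EuclideanSpace ℝ ι :=
  (EuclideanSpace.equiv ι ℝ).symm (fun i => fderiv ℝ p x (EuclideanSpace.single i 1))

/-- The seminorm `‖f‖_{N,∞} = sup_x ‖D^N f(x)‖`. -/
def snorm {X Y : Type*} [NormedAddCommGroup X] [NormedSpace ℝ X] [NormedAddCommGroup Y]
    [NormedSpace ℝ Y] (N : ℕ) (f : X → Y) : ℝ := ⨆ x, ‖iteratedFDeriv ℝ N f x‖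

/-- Periodization `f̄(x) = Σ_{q∈ℤ^d} f(x + 2πq)`. -/
def per (m n : ℕ) {F : Type*} [AddCommMonoid F] [TopologicalSpace F]
    (f : Sp m n → F) (x : Sp m n) : F :=
  ∑' q : Fin m ⊕ Fin n → ℤ, f (x + lat m n q)

/-- Rescaled profile `v_k(x) := ε^{(S+1)(k-1)} v(ε^{-k}x)` (for `k ≥ 1`). -/
def vsc (m n S : ℕ) (v : Sp m n → Sp m n) (ε : ℝ) (k : ℕ) (z : Sp m n) : Sp m n :=
  ε ^ ((S + 1) * (k - 1)) • v ((ε ^ k)⁻¹ • z)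

/-- Rescaled pressure profile `p_k(x) := ε^{2(S+1)(k-1)} p(ε^{-k}x)` (for `k ≥ 1`). -/
def psc (m n S : ℕ) (p : Sp m n → ℝ) (ε : ℝ) (k : ℕ) (z : Sp m n) : ℝ :=
  ε ^ (2 * (S + 1) * (k - 1)) • p ((ε ^ (k : ℕ))⁻¹ • z)

/-- The shear correction `w(x) = (0, Σ_j ν_j χ(dist_{T^m}(x', y_j)))`. -/
def wblock (m n : ℕ) {J : ℕ} (y : Fin J → Fin m → ℝ)
    (ν : Fin J → EuclideanSpace ℝ (Fin n)) (χ : ℝ → ℝ) (x : Sp m n) : Sp m n :=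
  pair m n 0 (fun i => ∑ j, ν j i * χ (distT m (fst' m n x) (y j)))

/-- The quasi-periodic building block velocity field
`u_k(t,x) = Σ_j Σ_q v_k((x'-y_j, x''-ν_j t) + 2πq) + w(x)`. -/
def ublock (m n S : ℕ) (v : Sp m n → Sp m n) (ε : ℝ) (k : ℕ) {J : ℕ}
    (y : Fin J → Fin m → ℝ) (ν : Fin J → EuclideanSpace ℝ (Fin n)) (χ : ℝ → ℝ)
    (t : ℝ) (x : Sp m n) : Sp m n :=
  (∑ j, per m n (vsc m n S v ε k) (x - pair m n (y j) (fun i => ν j i * t)))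
    + wblock m n y ν χ x

/-- The quasi-periodic building block pressure
`P_k(t,x) = Σ_j Σ_q p_k((x'-y_j, x''-ν_j t) + 2πq)`. -/
def Pblock (m n S : ℕ) (p : Sp m n → ℝ) (ε : ℝ) (k : ℕ) {J : ℕ}
    (y : Fin J → Fin m → ℝ) (ν : Fin J → EuclideanSpace ℝ (Fin n))
    (t : ℝ) (x : Sp m n) : ℝ :=
  ∑ j, per m n (psc m n S p ε k) (x - pair m n (y j) (fun i => ν j i * t))


/-!
Near any point, each periodized bump `Σ_q v_k(· + 2πq)` is a single lattice translate of
`v_k`, since `v_k` lives in a ball of radius `ε^k ≤ 1` while lattice points are `2π` apart; and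
the rescaling `v ↦ v_k`, `p ↦ p_k` preserves the steady Euler equations. On the `j`-th
cylinder `dist_{T^m}(x', y_j) < ε^k` the shear `w` is the constant `(0, ν_j)`, so there the
block is the steady flow `v_k` transported with velocity `(0, ν_j)`: the extra convective term
`(0, ν_j)·∇v̄_j` is exactly `-∂_t v̄_j`. Elsewhere the bumps vanish, and `w` depends on `x'`
only while pointing in the `x''` directions, so `div w = 0` and `(u·∇)w = 0`. The torus
distance is smooth on `0 < dist < π`, which covers the transition region `[ε^k, 2ε^k]` of `χ`.
-/

open Real Filter Metric Topology

lemma fderiv_apply_eq_zero_of_forall_add_smul {V F : Type*} [NormedAddCommGroup V]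
    [NormedSpace ℝ V] [NormedAddCommGroup F] [NormedSpace ℝ F] {f : V → F} {x v : V}
    (hf : DifferentiableAt ℝ f x) (h : ∀ t : ℝ, f (x + t • v) = f x) : fderiv ℝ f x v = 0 := by
  rw [← hf.lineDeriv_eq_fderiv, lineDeriv, funext h, deriv_const]

lemma fderiv_const_smul_comp_smul {V F : Type*} [NormedAddCommGroup V] [NormedSpace ℝ V]
    [NormedAddCommGroup F] [NormedSpace ℝ F] {g : V → F} (hg : Differentiable ℝ g) (c a : ℝ)
    (z : V) : fderiv ℝ (fun w => c • g (a • w)) z = (c * a) • fderiv ℝ g (a • z) := by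
  have h : HasFDerivAt (fun w => c • g (a • w)) _ z :=
    ((hg (a • z)).hasFDerivAt.comp z ((hasFDerivAt_id z).const_smul a)).const_smul c
  rw [h.fderiv]
  ext w
  simp [smul_smul]

lemma tsupport_const_smul_comp_inv_smul_subset {V F : Type*} [NormedAddCommGroup V]
    [NormedSpace ℝ V] [NormedAddCommGroup F] [NormedSpace ℝ F] {f : V → F} {ρ s : ℝ}
    (hf : tsupport f ⊆ closedBall 0 ρ) (c : ℝ) (hs : 0 < s) :
    tsupport (fun z => c • f (s⁻¹ • z)) ⊆ closedBall 0 (s * ρ) := by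
  intro z hz
  have hz' := tsupport_smul_subset_right (fun _ => c) (fun z => f (s⁻¹ • z)) hz
  rw [tsupport, support_comp_inv_smul₀ hs.ne', closure_smul₀' hs.ne'] at hz'
  obtain ⟨w, hw, rfl⟩ := hz'
  rw [mem_closedBall_zero_iff, norm_smul, Real.norm_of_nonneg hs.le]
  exact mul_le_mul_of_nonneg_left (mem_closedBall_zero_iff.1 (hf hw)) hs.le

section Vanishing

variable {V F : Type*} [NormedAddCommGroup V] [NormedSpace ℝ V] [NormedAddCommGroup F]
  {f : V → F} {ρ : ℝ} {z : V}

/-- The support of a continuous function is open, so it misses the boundary sphere. -/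
lemma eq_zero_of_tsupport_subset_closedBall (hf : Continuous f) (hρ : 0 < ρ)
    (hs : tsupport f ⊆ closedBall 0 ρ) (hz : ρ ≤ ‖z‖) : f z = 0 := by
  by_contra h
  have hmem : z ∈ interior (closedBall (0 : V) ρ) :=
    interior_mono hs (interior_maximal (subset_tsupport f) hf.isOpen_support h)
  rw [interior_closedBall _ hρ.ne', mem_ball_zero_iff] at hmem
  linarith

lemma fderiv_eq_zero_of_tsupport_subset_closedBall [NormedSpace ℝ F] (hf : ContDiff ℝ 1 f)
    (hρ : 0 < ρ) (hs : tsupport f ⊆ closedBall 0 ρ) (hz : ρ ≤ ‖z‖) : fderiv ℝ f z = 0 :=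
  eq_zero_of_tsupport_subset_closedBall (hf.continuous_fderiv one_ne_zero) hρ
    ((tsupport_fderiv_subset ℝ).trans hs) hz

end Vanishing

section VectorCalculus

variable {ι : Type*} [Fintype ι] [DecidableEq ι]

lemma conv_eq_fderiv_apply (f g : EuclideanSpace ℝ ι → EuclideanSpace ℝ ι)
    (x : EuclideanSpace ℝ ι) : conv f g x = fderiv ℝ g x (f x) := by
  conv_rhs => rw [← (EuclideanSpace.basisFun ι ℝ).sum_repr (f x)]
  simp [conv, map_sum]

lemma grad_eq_toDual_symm (p : EuclideanSpace ℝ ι → ℝ) (x : EuclideanSpace ℝ ι) :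
    grad p x = (InnerProductSpace.toDual ℝ (EuclideanSpace ℝ ι)).symm (fderiv ℝ p x) := by
  ext i
  have h := InnerProductSpace.toDual_symm_apply (x := EuclideanSpace.single i (1 : ℝ))
    (y := fderiv ℝ p x)
  rw [EuclideanSpace.inner_single_right] at h
  simpa [grad] using h.symm

lemma diverg_eq_trace (f : EuclideanSpace ℝ ι → EuclideanSpace ℝ ι) (x : EuclideanSpace ℝ ι) :
    diverg f x = LinearMap.trace ℝ (EuclideanSpace ℝ ι) (fderiv ℝ f x) := by
  rw [LinearMap.trace_eq_sum_inner _ (EuclideanSpace.basisFun ι ℝ)]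
  simp [diverg, EuclideanSpace.inner_single_left]

end VectorCalculus

section SteadyEuler

variable {ι : Type*} [Fintype ι] [DecidableEq ι]

structure IsSteadyEulerBump (ρ : ℝ) (v : EuclideanSpace ℝ ι → EuclideanSpace ℝ ι)
    (p : EuclideanSpace ℝ ι → ℝ) : Prop where
  contDiff_v : ContDiff ℝ (⊤ : ℕ∞) v
  contDiff_p : ContDiff ℝ (⊤ : ℕ∞) p
  tsupport_v : tsupport v ⊆ closedBall 0 ρ
  tsupport_p : tsupport p ⊆ closedBall 0 ρ
  euler : ∀ x, conv v v x + grad p x = 0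
  diverg_eq_zero : ∀ x, diverg v x = 0

namespace IsSteadyEulerBump

variable {ρ : ℝ} {v : EuclideanSpace ℝ ι → EuclideanSpace ℝ ι} {p : EuclideanSpace ℝ ι → ℝ}
  {z : EuclideanSpace ℝ ι}

lemma differentiable_v (h : IsSteadyEulerBump ρ v p) : Differentiable ℝ v :=
  h.contDiff_v.differentiable (by simp)

lemma differentiable_p (h : IsSteadyEulerBump ρ v p) : Differentiable ℝ p :=
  h.contDiff_p.differentiable (by simp)

lemma mono {ρ' : ℝ} (h : IsSteadyEulerBump ρ v p) (hρ : ρ ≤ ρ') : IsSteadyEulerBump ρ' v p :=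
  { h with
    tsupport_v := h.tsupport_v.trans (closedBall_subset_closedBall hρ)
    tsupport_p := h.tsupport_p.trans (closedBall_subset_closedBall hρ) }

lemma v_eq_zero (h : IsSteadyEulerBump ρ v p) (hρ : 0 < ρ) (hz : ρ ≤ ‖z‖) : v z = 0 :=
  eq_zero_of_tsupport_subset_closedBall h.contDiff_v.continuous hρ h.tsupport_v hz

lemma fderiv_v_eq_zero (h : IsSteadyEulerBump ρ v p) (hρ : 0 < ρ) (hz : ρ ≤ ‖z‖) :
    fderiv ℝ v z = 0 :=
  fderiv_eq_zero_of_tsupport_subset_closedBall (h.contDiff_v.of_le (by simp)) hρ h.tsupport_v hz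

lemma grad_p_eq_zero (h : IsSteadyEulerBump ρ v p) (hρ : 0 < ρ) (hz : ρ ≤ ‖z‖) :
    grad p z = 0 := by
  rw [grad_eq_toDual_symm,
    fderiv_eq_zero_of_tsupport_subset_closedBall (h.contDiff_p.of_le (by simp)) hρ h.tsupport_p hz,
    map_zero]

theorem rescale (h : IsSteadyEulerBump ρ v p) (c : ℝ) {s : ℝ} (hs : 0 < s) :
    IsSteadyEulerBump (s * ρ) (fun z => c • v (s⁻¹ • z)) (fun z => c ^ 2 • p (s⁻¹ • z)) where
  contDiff_v := (h.contDiff_v.comp (contDiff_id.const_smul _)).const_smul c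
  contDiff_p := (h.contDiff_p.comp (contDiff_id.const_smul _)).const_smul _
  tsupport_v := tsupport_const_smul_comp_inv_smul_subset h.tsupport_v c hs
  tsupport_p := tsupport_const_smul_comp_inv_smul_subset h.tsupport_p _ hs
  euler z := by
    have hE := congrArg ((c ^ 2 * s⁻¹) • ·) (h.euler (s⁻¹ • z))
    simp only [smul_zero, smul_add] at hE
    rw [conv_eq_fderiv_apply, grad_eq_toDual_symm, fderiv_const_smul_comp_smul h.differentiable_v,
      fderiv_const_smul_comp_smul h.differentiable_p, ← hE, conv_eq_fderiv_apply,
      grad_eq_toDual_symm]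
    simp only [smul_apply, map_smul, smul_smul]
    ring_nf
  diverg_eq_zero z := by
    rw [diverg_eq_trace, fderiv_const_smul_comp_smul h.differentiable_v,
      ContinuousLinearMap.toLinearMap_smul, map_smul, ← diverg_eq_trace, h.diverg_eq_zero,
      smul_zero]

end IsSteadyEulerBump

end SteadyEuler

theorem isSteadyEulerBump_vsc_psc {m n S k : ℕ} {ε : ℝ} {v : Sp m n → Sp m n}
    {p : Sp m n → ℝ} (h : IsSteadyEulerBump 1 v p) (hε : 0 < ε) :
    IsSteadyEulerBump (ε ^ k) (vsc m n S v ε k) (psc m n S p ε k) := by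
  have h' := h.rescale (ε ^ ((S + 1) * (k - 1))) (pow_pos hε k)
  rw [mul_one, ← pow_mul, mul_comm _ 2, ← mul_assoc] at h'
  exact h'

section Periodization

variable {m n : ℕ}

lemma lat_sub (q q' : Fin m ⊕ Fin n → ℤ) : lat m n (q - q') = lat m n q - lat m n q' := by
  ext s
  simp [lat, mul_sub]

lemma lat_add (q q' : Fin m ⊕ Fin n → ℤ) : lat m n (q + q') = lat m n q + lat m n q' := by
  ext s
  simp [lat, mul_add]

lemma two_pi_le_norm_lat {q : Fin m ⊕ Fin n → ℤ} (hq : q ≠ 0) : 2 * π ≤ ‖lat m n q‖ := by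
  obtain ⟨s, hs⟩ := Function.ne_iff.1 hq
  have h1 : (1 : ℝ) ≤ |(q s : ℝ)| := by exact_mod_cast Int.one_le_abs hs
  calc 2 * π = 2 * π * 1 := (mul_one _).symm
    _ ≤ 2 * π * |(q s : ℝ)| := by gcongr
    _ = ‖lat m n q s‖ := by simp [lat, abs_of_pos pi_pos]
    _ ≤ ‖lat m n q‖ := PiLp.norm_apply_le _ _

lemma exists_forall_ne_two_lt_norm_add_lat (x : Sp m n) :
    ∃ q₀, ∀ q ≠ q₀, 2 < ‖x + lat m n q‖ := by
  by_cases hnear : ∃ q₀, ‖x + lat m n q₀‖ ≤ 2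
  · obtain ⟨q₀, hq₀⟩ := hnear
    refine ⟨q₀, fun q hq => ?_⟩
    have h2π := two_pi_le_norm_lat (sub_ne_zero.2 hq)
    have htri : ‖lat m n (q - q₀)‖ ≤ ‖x + lat m n q‖ + ‖x + lat m n q₀‖ := by
      rw [lat_sub, show lat m n q - lat m n q₀ = (x + lat m n q) - (x + lat m n q₀) by abel]
      exact norm_sub_le _ _
    linarith [pi_gt_three]
  · simp only [not_exists, not_le] at hnear
    exact ⟨0, fun q _ => hnear q⟩

lemma per_eventuallyEq_comp_add_lat {F : Type*} [AddCommMonoid F] [TopologicalSpace F]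
    {f : Sp m n → F} (hf : tsupport f ⊆ closedBall 0 1) {x : Sp m n} {q₀ : Fin m ⊕ Fin n → ℤ}
    (hq₀ : ∀ q ≠ q₀, 2 < ‖x + lat m n q‖) :
    per m n f =ᶠ[𝓝 x] fun z => f (z + lat m n q₀) := by
  filter_upwards [ball_mem_nhds x one_pos] with z hz
  refine tsum_eq_single q₀ fun q hq => image_eq_zero_of_notMem_tsupport fun hmem => ?_
  have h1 := mem_closedBall_zero_iff.1 (hf hmem)
  have h2 : ‖x + lat m n q‖ ≤ ‖z - x‖ + ‖z + lat m n q‖ := by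
    rw [show x + lat m n q = -(z - x) + (z + lat m n q) by abel]
    exact (norm_add_le _ _).trans_eq (by rw [norm_neg])
  linarith [hq₀ q hq, mem_ball_iff_norm.1 hz]

lemma fderiv_per_eq {F : Type*} [NormedAddCommGroup F] [NormedSpace ℝ F] {f : Sp m n → F}
    (hs : tsupport f ⊆ closedBall 0 1) {x : Sp m n} {q₀ : Fin m ⊕ Fin n → ℤ}
    (hq₀ : ∀ q ≠ q₀, 2 < ‖x + lat m n q‖) :
    fderiv ℝ (per m n f) x = fderiv ℝ f (x + lat m n q₀) := by
  rw [(per_eventuallyEq_comp_add_lat hs hq₀).fderiv_eq, fderiv_comp_add_right]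

lemma contDiff_per {F : Type*} [NormedAddCommGroup F] [NormedSpace ℝ F] {f : Sp m n → F}
    (hf : ContDiff ℝ (⊤ : ℕ∞) f) (hs : tsupport f ⊆ closedBall 0 1) :
    ContDiff ℝ (⊤ : ℕ∞) (per m n f) := by
  refine contDiff_iff_contDiffAt.2 fun x => ?_
  obtain ⟨q₀, hq₀⟩ := exists_forall_ne_two_lt_norm_add_lat x
  exact (hf.comp (contDiff_id.add contDiff_const)).contDiffAt.congr_of_eventuallyEq
    (per_eventuallyEq_comp_add_lat hs hq₀)

lemma diverg_per {v : Sp m n → Sp m n} {p : Sp m n → ℝ} (h : IsSteadyEulerBump 1 v p)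
    (x : Sp m n) : diverg (per m n v) x = 0 := by
  obtain ⟨q₀, hq₀⟩ := exists_forall_ne_two_lt_norm_add_lat x
  rw [diverg_eq_trace, fderiv_per_eq h.tsupport_v hq₀, ← diverg_eq_trace, h.diverg_eq_zero]

lemma per_add_lat {F : Type*} [AddCommMonoid F] [TopologicalSpace F] (f : Sp m n → F)
    (x : Sp m n) (q : Fin m ⊕ Fin n → ℤ) : per m n f (x + lat m n q) = per m n f x := by
  unfold per
  simp_rw [add_assoc, ← lat_add]
  exact (Equiv.addLeft q).tsum_eq fun r => f (x + lat m n r)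

end Periodization

section TorusDistance

variable {m n : ℕ}

lemma coe_add_two_pi_mul_int (a : ℝ) (q : ℤ) :
    ((a + 2 * π * q : ℝ) : AddCircle (2 * π)) = a := by
  have hq : ((2 * π * q : ℝ) : AddCircle (2 * π)) = 0 :=
    (AddCircle.coe_eq_zero_iff _).2 ⟨q, by rw [zsmul_eq_mul]; ring⟩
  rw [AddCircle.coe_add, hq, add_zero]

lemma dist_coe_le_abs_sub_add (a b : ℝ) (q : ℤ) :
    dist (a : AddCircle (2 * π)) (b : AddCircle (2 * π)) ≤ |a - b + 2 * π * q| := by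
  rw [dist_eq_norm, ← AddCircle.coe_sub, ← coe_add_two_pi_mul_int (a - b) q]
  exact QuotientAddGroup.norm_mk_le_norm

lemma distT_nonneg (a b : Fin m → ℝ) : 0 ≤ distT m a b := Real.sqrt_nonneg _

lemma dist_coe_le_distT (a b : Fin m → ℝ) (i : Fin m) :
    dist (a i : AddCircle (2 * π)) (b i : AddCircle (2 * π)) ≤ distT m a b := by
  refine Real.le_sqrt_of_sq_le ?_
  exact Finset.single_le_sum (f := fun i => dist (a i : AddCircle (2 * π)) (b i) ^ 2)
    (fun i _ => sq_nonneg _) (Finset.mem_univ i)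

lemma distT_fst'_le_norm (x c : Sp m n) (q : Fin m ⊕ Fin n → ℤ) :
    distT m (fst' m n x) (fst' m n c) ≤ ‖x - c + lat m n q‖ := by
  rw [EuclideanSpace.norm_eq, distT]
  refine Real.sqrt_le_sqrt ?_
  rw [Fintype.sum_sum_type]
  refine le_add_of_le_of_nonneg (Finset.sum_le_sum fun i _ => ?_) (by positivity)
  have h := dist_coe_le_abs_sub_add (fst' m n x i) (fst' m n c i) (q (Sum.inl i))
  rw [Real.norm_eq_abs]
  exact pow_le_pow_left₀ dist_nonneg (h.trans_eq (by simp [fst', lat])) 2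

lemma distT_fst'_add_lat (x : Sp m n) (q : Fin m ⊕ Fin n → ℤ) (b : Fin m → ℝ) :
    distT m (fst' m n (x + lat m n q)) b = distT m (fst' m n x) b := by
  have hcoe (i : Fin m) :
      ((fst' m n (x + lat m n q) i : ℝ) : AddCircle (2 * π)) = fst' m n x i :=
    coe_add_two_pi_mul_int _ _
  simp only [distT, hcoe]

lemma continuous_distT (b : Fin m → ℝ) : Continuous fun a : Fin m → ℝ => distT m a b := by
  unfold distT
  fun_prop

lemma exists_norm_coe_eq_abs_sub {c₀ : ℝ} (h : ‖(c₀ : AddCircle (2 * π))‖ < π) :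
    ∃ κ : ℝ, |c₀ - κ| < π ∧ ∀ c : ℝ, |c - κ| < π → ‖(c : AddCircle (2 * π))‖ = |c - κ| := by
  set q := round ((2 * π)⁻¹ * c₀)
  refine ⟨2 * π * q, by rwa [AddCircle.norm_eq, mul_comm] at h, fun c hc => ?_⟩
  have hc' : (c : AddCircle (2 * π)) = ((c - 2 * π * q : ℝ) : AddCircle (2 * π)) := by
    rw [← coe_add_two_pi_mul_int (c - 2 * π * q) q, sub_add_cancel]
  rw [hc', AddCircle.norm_coe_eq_abs_iff _ (by positivity), abs_of_pos (by positivity : 0 < 2 * π)]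
  linarith

/-- Away from `0` and from the cut locus, `distT` is locally the Euclidean distance to a
fixed lift of `b`. -/
lemma contDiffAt_distT {a₀ b : Fin m → ℝ} (h0 : 0 < distT m a₀ b) (hπ : distT m a₀ b < π) :
    ContDiffAt ℝ (⊤ : ℕ∞) (fun a => distT m a b) a₀ := by
  have hκ (i : Fin m) : ∃ κ : ℝ, |a₀ i - b i - κ| < π ∧
      ∀ c : ℝ, |c - κ| < π → ‖(c : AddCircle (2 * π))‖ = |c - κ| := by
    refine exists_norm_coe_eq_abs_sub ?_
    rw [AddCircle.coe_sub, ← dist_eq_norm]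
    exact (dist_coe_le_distT a₀ b i).trans_lt hπ
  choose κ hκ₀ hκ using hκ
  set Q : (Fin m → ℝ) → ℝ := fun a => ∑ i, (a i - b i - κ i) ^ 2
  have hQ : ∀ᶠ a in 𝓝 a₀, distT m a b = √(Q a) := by
    have hnear : ∀ᶠ a in 𝓝 a₀, ∀ i, |a i - b i - κ i| < π :=
      eventually_all.2 fun i => (by fun_prop : Continuous fun a : Fin m → ℝ => |a i - b i - κ i|)
        |>.tendsto a₀ |>.eventually (gt_mem_nhds (hκ₀ i))
    filter_upwards [hnear] with a ha
    simp only [distT, Q, dist_eq_norm, ← AddCircle.coe_sub]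
    congr 1
    exact Finset.sum_congr rfl fun i _ => by rw [hκ i _ (ha i), sq_abs]
  have hQ₀ : 0 < Q a₀ := by
    rw [hQ.self_of_nhds] at h0
    exact Real.sqrt_pos.1 h0
  exact ((Real.contDiffAt_sqrt hQ₀.ne').comp a₀ (by fun_prop : ContDiff ℝ _ Q).contDiffAt)
    |>.congr_of_eventuallyEq hQ

end TorusDistance

structure IsCutoff (ρ : ℝ) (χ : ℝ → ℝ) : Prop where
  contDiff : ContDiff ℝ (⊤ : ℕ∞) χ
  eq_one : ∀ r, |r| < ρ → χ r = 1
  eq_zero : ∀ r, 2 * ρ < |r| → χ r = 0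

namespace IsCutoff

variable {m : ℕ} {ρ : ℝ} {χ : ℝ → ℝ}

lemma eventually_comp_distT_eq_one (hχ : IsCutoff ρ χ) {a b : Fin m → ℝ}
    (h : distT m a b < ρ) : ∀ᶠ a' in 𝓝 a, χ (distT m a' b) = 1 := by
  filter_upwards [(continuous_distT b).tendsto a |>.eventually (gt_mem_nhds h)] with a' ha'
  exact hχ.eq_one _ (by rwa [abs_of_nonneg (distT_nonneg _ _)])

lemma eventually_comp_distT_eq_zero (hχ : IsCutoff ρ χ) {a b : Fin m → ℝ}
    (h : 2 * ρ < distT m a b) : ∀ᶠ a' in 𝓝 a, χ (distT m a' b) = 0 := by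
  filter_upwards [(continuous_distT b).tendsto a |>.eventually (lt_mem_nhds h)] with a' ha'
  exact hχ.eq_zero _ (by rwa [abs_of_nonneg (distT_nonneg _ _)])

/-- Where `χ ∘ distT` is not locally constant, `distT` stays in `[ρ, 2ρ] ⊂ (0, π)`. -/
lemma contDiff_comp_distT (hχ : IsCutoff ρ χ) (hρ : 0 < ρ) (hρπ : 2 * ρ < π) (b : Fin m → ℝ) :
    ContDiff ℝ (⊤ : ℕ∞) fun a => χ (distT m a b) := by
  refine contDiff_iff_contDiffAt.2 fun a => ?_
  rcases lt_or_ge (distT m a b) ρ with hlt | hge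
  · exact contDiffAt_const.congr_of_eventuallyEq (hχ.eventually_comp_distT_eq_one hlt)
  rcases le_or_gt (distT m a b) (2 * ρ) with hle | hgt
  · exact hχ.contDiff.contDiffAt.comp a (contDiffAt_distT (hρ.trans_le hge) (by linarith))
  · exact contDiffAt_const.congr_of_eventuallyEq (hχ.eventually_comp_distT_eq_zero hgt)

end IsCutoff

def SeparatedOnTorus (m : ℕ) {J : ℕ} (r : ℝ) (y : Fin J → Fin m → ℝ) : Prop :=
  ∀ j j' : Fin J, j ≠ j' → ∀ a : Fin m → ℝ, ¬(distT m a (y j) ≤ r ∧ distT m a (y j') ≤ r)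

lemma SeparatedOnTorus.lt_distT {m J : ℕ} {r : ℝ} {y : Fin J → Fin m → ℝ}
    (hy : SeparatedOnTorus m r y) {a : Fin m → ℝ} {j j' : Fin J} (hj : distT m a (y j) ≤ r)
    (hne : j' ≠ j) : r < distT m a (y j') :=
  lt_of_not_ge fun h => hy j' j hne a ⟨h, hj⟩

def cylinderCutoff (m n : ℕ) (χ : ℝ → ℝ) (b : Fin m → ℝ) (x : Sp m n) : ℝ :=
  χ (distT m (fst' m n x) b)

section Shear

variable {m n J : ℕ} {ρ : ℝ} {χ : ℝ → ℝ} {y : Fin J → Fin m → ℝ}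
  {ν : Fin J → EuclideanSpace ℝ (Fin n)}

lemma fst'_pair (a : Fin m → ℝ) (b : Fin n → ℝ) : fst' m n (pair m n a b) = a := rfl

lemma contDiff_fst' : ContDiff ℝ (⊤ : ℕ∞) (fst' m n) := by
  unfold fst'
  fun_prop

lemma contDiff_cylinderCutoff (hχ : IsCutoff ρ χ) (hρ : 0 < ρ) (hρπ : 2 * ρ < π)
    (b : Fin m → ℝ) : ContDiff ℝ (⊤ : ℕ∞) (cylinderCutoff m n χ b) :=
  (hχ.contDiff_comp_distT hρ hρπ b).comp contDiff_fst'

lemma fderiv_cylinderCutoff_apply_eq_zero (hχ : IsCutoff ρ χ) (hρ : 0 < ρ) (hρπ : 2 * ρ < π)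
    (b : Fin m → ℝ) (x : Sp m n) {ξ : Sp m n} (hξ : fst' m n ξ = 0) :
    fderiv ℝ (cylinderCutoff m n χ b) x ξ = 0 := by
  refine fderiv_apply_eq_zero_of_forall_add_smul
    ((contDiff_cylinderCutoff hχ hρ hρπ b).differentiable (by simp) x) fun t => ?_
  have hfst : fst' m n (x + t • ξ) = fst' m n x := by
    funext i
    simp [fst', show ξ (Sum.inl i) = 0 from congrFun hξ i]
  rw [cylinderCutoff, hfst, cylinderCutoff]

lemma fderiv_cylinderCutoff_eq_zero (hχ : IsCutoff ρ χ) {b : Fin m → ℝ} {x : Sp m n}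
    (h : distT m (fst' m n x) b < ρ ∨ 2 * ρ < distT m (fst' m n x) b) :
    fderiv ℝ (cylinderCutoff m n χ b) x = 0 := by
  have hcont := (contDiff_fst' (m := m) (n := n)).continuous.tendsto x
  rcases h with hlt | hgt
  · have h1 : cylinderCutoff m n χ b =ᶠ[𝓝 x] fun _ => 1 :=
      hcont.eventually (hχ.eventually_comp_distT_eq_one hlt)
    rw [h1.fderiv_eq, fderiv_const_apply]
  · have h0 : cylinderCutoff m n χ b =ᶠ[𝓝 x] fun _ => 0 :=
      hcont.eventually (hχ.eventually_comp_distT_eq_zero hgt)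
    rw [h0.fderiv_eq, fderiv_const_apply]

lemma wblock_eq_sum (x : Sp m n) :
    wblock m n y ν χ x = ∑ j, cylinderCutoff m n χ (y j) x • pair m n 0 (fun i => ν j i) := by
  ext (i | i) <;> simp [wblock, pair, cylinderCutoff, mul_comm]

lemma wblock_add_lat (x : Sp m n) (q : Fin m ⊕ Fin n → ℤ) :
    wblock m n y ν χ (x + lat m n q) = wblock m n y ν χ x := by
  simp only [wblock, distT_fst'_add_lat]

lemma hasFDerivAt_wblock (hχ : IsCutoff ρ χ) (hρ : 0 < ρ) (hρπ : 2 * ρ < π) (x : Sp m n) :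
    HasFDerivAt (wblock m n y ν χ)
      (∑ j, (fderiv ℝ (cylinderCutoff m n χ (y j)) x).smulRight (pair m n 0 fun i => ν j i)) x := by
  rw [funext wblock_eq_sum]
  exact HasFDerivAt.fun_sum fun j _ =>
    ((contDiff_cylinderCutoff hχ hρ hρπ (y j)).differentiable (by simp) x).hasFDerivAt.smul_const _

lemma contDiff_wblock (hχ : IsCutoff ρ χ) (hρ : 0 < ρ) (hρπ : 2 * ρ < π) :
    ContDiff ℝ (⊤ : ℕ∞) (wblock m n y ν χ) := by
  rw [funext wblock_eq_sum]
  exact ContDiff.sum fun j _ => (contDiff_cylinderCutoff hχ hρ hρπ (y j)).smul contDiff_const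

lemma fderiv_wblock_apply_eq_zero (hχ : IsCutoff ρ χ) (hρ : 0 < ρ) (hρπ : 2 * ρ < π)
    (x : Sp m n) {ξ : Sp m n} (hξ : fst' m n ξ = 0) : fderiv ℝ (wblock m n y ν χ) x ξ = 0 := by
  rw [(hasFDerivAt_wblock hχ hρ hρπ x).fderiv]
  simp [fderiv_cylinderCutoff_apply_eq_zero hχ hρ hρπ _ x hξ]

lemma diverg_wblock (hχ : IsCutoff ρ χ) (hρ : 0 < ρ) (hρπ : 2 * ρ < π) (x : Sp m n) :
    diverg (wblock m n y ν χ) x = 0 := by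
  rw [diverg_eq_trace, (hasFDerivAt_wblock hχ hρ hρπ x).fderiv]
  simp [LinearMap.trace_smulRight, fderiv_cylinderCutoff_apply_eq_zero hχ hρ hρπ _ x
    (fst'_pair 0 _)]

lemma wblock_eq_of_distT_lt (hχ : IsCutoff ρ χ) (hy : SeparatedOnTorus m (2 * ρ) y)
    (hρ : 0 < ρ) {x : Sp m n} {j : Fin J} (hj : distT m (fst' m n x) (y j) < ρ) :
    wblock m n y ν χ x = pair m n 0 (fun i => ν j i) := by
  rw [wblock_eq_sum, Finset.sum_eq_single j]
  · rw [cylinderCutoff, hχ.eq_one _ (by rwa [abs_of_nonneg (distT_nonneg _ _)]), one_smul]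
  · intro j' _ hne
    have hfar := hy.lt_distT (by linarith) hne
    rw [cylinderCutoff, hχ.eq_zero _ (by rwa [abs_of_nonneg (distT_nonneg _ _)]), zero_smul]
  · exact fun h => absurd (Finset.mem_univ j) h

lemma fderiv_wblock_eq_zero_of_distT_lt (hχ : IsCutoff ρ χ) (hy : SeparatedOnTorus m (2 * ρ) y)
    (hρ : 0 < ρ) (hρπ : 2 * ρ < π) {x : Sp m n} {j : Fin J}
    (hj : distT m (fst' m n x) (y j) < ρ) : fderiv ℝ (wblock m n y ν χ) x = 0 := by
  rw [(hasFDerivAt_wblock hχ hρ hρπ x).fderiv]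
  refine Finset.sum_eq_zero fun j' _ => ?_
  rw [fderiv_cylinderCutoff_eq_zero hχ, ContinuousLinearMap.zero_smulRight]
  rcases eq_or_ne j' j with rfl | hne
  · exact Or.inl hj
  · exact Or.inr (hy.lt_distT (by linarith) hne)

end Shear

section PointwiseEuler

variable {m n J : ℕ} {ρ : ℝ} {χ : ℝ → ℝ} {y : Fin J → Fin m → ℝ}
  {ν : Fin J → EuclideanSpace ℝ (Fin n)} {V : Sp m n → Sp m n} {Pp : Sp m n → ℝ}
  {x : Sp m n} {z : Fin J → Sp m n}

lemma fderiv_wblock_apply_sum_add_wblock (hV : IsSteadyEulerBump ρ V Pp) (hχ : IsCutoff ρ χ)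
    (hy : SeparatedOnTorus m (2 * ρ) y) (hρ : 0 < ρ) (hρπ : 2 * ρ < π)
    (hz : ∀ j, distT m (fst' m n x) (y j) ≤ ‖z j‖) :
    fderiv ℝ (wblock m n y ν χ) x (∑ j, V (z j) + wblock m n y ν χ x) = 0 := by
  rw [map_add, map_sum,
    fderiv_wblock_apply_eq_zero hχ hρ hρπ x (ξ := wblock m n y ν χ x) (fst'_pair 0 _), add_zero]
  refine Finset.sum_eq_zero fun j _ => ?_
  rcases lt_or_ge ‖z j‖ ρ with hlt | hge
  · rw [fderiv_wblock_eq_zero_of_distT_lt hχ hy hρ hρπ ((hz j).trans_lt hlt),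
      zero_apply]
  · rw [hV.v_eq_zero hρ hge, map_zero]

lemma fderiv_apply_sum_add_wblock_add_grad (hV : IsSteadyEulerBump ρ V Pp) (hχ : IsCutoff ρ χ)
    (hy : SeparatedOnTorus m (2 * ρ) y) (hρ : 0 < ρ)
    (hz : ∀ j, distT m (fst' m n x) (y j) ≤ ‖z j‖) (j : Fin J) :
    fderiv ℝ V (z j) (∑ j', V (z j') + wblock m n y ν χ x) + grad Pp (z j)
      = fderiv ℝ V (z j) (pair m n 0 fun i => ν j i) := by
  rcases lt_or_ge ‖z j‖ ρ with hlt | hge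
  · have hj := (hz j).trans_lt hlt
    have hothers : ∀ j' ≠ j, V (z j') = 0 := fun j' hne =>
      hV.v_eq_zero hρ (by linarith [hy.lt_distT (by linarith) hne, hz j'])
    rw [Finset.sum_eq_single_of_mem j (Finset.mem_univ j) fun j' _ => hothers j',
      wblock_eq_of_distT_lt hχ hy hρ hj, map_add, add_right_comm, ← conv_eq_fderiv_apply,
      hV.euler, zero_add]
  · simp [hV.fderiv_v_eq_zero hρ hge, hV.grad_p_eq_zero hρ hge]

end PointwiseEuler

section Block

variable {m n S J k : ℕ} {ε ρ : ℝ} {v : Sp m n → Sp m n} {pv : Sp m n → ℝ}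
  {χ : ℝ → ℝ} {y : Fin J → Fin m → ℝ} {ν : Fin J → EuclideanSpace ℝ (Fin n)}

lemma pair_mul_eq_add_smul (a : Fin m → ℝ) (b : Fin n → ℝ) (t : ℝ) :
    pair m n a (fun i => b i * t) = pair m n a 0 + t • pair m n 0 b := by
  ext (i | i) <;> simp [pair, mul_comm]

lemma hasDerivAt_pair_mul (a : Fin m → ℝ) (b : Fin n → ℝ) (t : ℝ) :
    HasDerivAt (fun s => pair m n a (fun i => b i * s)) (pair m n 0 b) t := by
  simp_rw [pair_mul_eq_add_smul]
  simpa using ((hasDerivAt_id t).smul_const (pair m n 0 b)).const_add (pair m n a 0)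

lemma per_sub_eq_zero {F : Type*} [AddCommMonoid F] [TopologicalSpace F] {f : Sp m n → F}
    (hs : tsupport f ⊆ closedBall 0 ρ) {x c : Sp m n}
    (h : ρ < distT m (fst' m n x) (fst' m n c)) : per m n f (x - c) = 0 := by
  refine (tsum_congr fun q => image_eq_zero_of_notMem_tsupport fun hq => ?_).trans tsum_zero
  linarith [mem_closedBall_zero_iff.1 (hs hq), distT_fst'_le_norm x c q]

lemma ublock_eq_wblock (hs : tsupport (vsc m n S v ε k) ⊆ closedBall 0 ρ) {t : ℝ} {x : Sp m n}
    (h : ∀ j, ρ < distT m (fst' m n x) (y j)) :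
    ublock m n S v ε k y ν χ t x = wblock m n y ν χ x := by
  rw [ublock, Finset.sum_eq_zero fun j _ => per_sub_eq_zero hs (by rw [fst'_pair]; exact h j),
    zero_add]

lemma Pblock_eq_zero (hs : tsupport (psc m n S pv ε k) ⊆ closedBall 0 ρ) {t : ℝ} {x : Sp m n}
    (h : ∀ j, ρ < distT m (fst' m n x) (y j)) : Pblock m n S pv ε k y ν t x = 0 :=
  Finset.sum_eq_zero fun j _ => per_sub_eq_zero hs (by rw [fst'_pair]; exact h j)

lemma ublock_add_lat (t : ℝ) (x : Sp m n) (q : Fin m ⊕ Fin n → ℤ) :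
    ublock m n S v ε k y ν χ t (x + lat m n q) = ublock m n S v ε k y ν χ t x := by
  simp only [ublock, wblock_add_lat, add_sub_right_comm _ (lat m n q), per_add_lat]

lemma Pblock_add_lat (t : ℝ) (x : Sp m n) (q : Fin m ⊕ Fin n → ℤ) :
    Pblock m n S pv ε k y ν t (x + lat m n q) = Pblock m n S pv ε k y ν t x := by
  simp only [Pblock, add_sub_right_comm _ (lat m n q), per_add_lat]


lemma contDiff_ublock (hv : ContDiff ℝ (⊤ : ℕ∞) (vsc m n S v ε k))
    (hs : tsupport (vsc m n S v ε k) ⊆ closedBall 0 1) (hχ : IsCutoff ρ χ) (hρ : 0 < ρ)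
    (hρπ : 2 * ρ < π) (t : ℝ) : ContDiff ℝ (⊤ : ℕ∞) (ublock m n S v ε k y ν χ t) :=
  (ContDiff.sum fun _ _ => (contDiff_per hv hs).comp (contDiff_id.sub contDiff_const)).add
    (contDiff_wblock hχ hρ hρπ)

lemma contDiff_Pblock (hp : ContDiff ℝ (⊤ : ℕ∞) (psc m n S pv ε k))
    (hs : tsupport (psc m n S pv ε k) ⊆ closedBall 0 1) (t : ℝ) :
    ContDiff ℝ (⊤ : ℕ∞) (Pblock m n S pv ε k y ν t) :=
  ContDiff.sum fun _ _ => (contDiff_per hp hs).comp (contDiff_id.sub contDiff_const)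

lemma fderiv_ublock (hv : ContDiff ℝ (⊤ : ℕ∞) (vsc m n S v ε k))
    (hs : tsupport (vsc m n S v ε k) ⊆ closedBall 0 1) (hχ : IsCutoff ρ χ) (hρ : 0 < ρ)
    (hρπ : 2 * ρ < π) (t : ℝ) (x : Sp m n) :
    fderiv ℝ (ublock m n S v ε k y ν χ t) x
      = ∑ j, fderiv ℝ (per m n (vsc m n S v ε k)) (x - pair m n (y j) fun i => ν j i * t)
        + fderiv ℝ (wblock m n y ν χ) x := by
  have hper := (contDiff_per hv hs).differentiable (by simp)
  have hterm (j : Fin J) : DifferentiableAt ℝ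
      (fun x => per m n (vsc m n S v ε k) (x - pair m n (y j) fun i => ν j i * t)) x :=
    (hper _).comp x (differentiableAt_id.sub_const _)
  unfold ublock
  rw [fderiv_fun_add (DifferentiableAt.fun_sum fun j _ => hterm j)
      ((contDiff_wblock hχ hρ hρπ).differentiable (by simp) x),
    fderiv_fun_sum fun j _ => hterm j]
  simp only [fderiv_comp_sub]

lemma fderiv_Pblock (hp : ContDiff ℝ (⊤ : ℕ∞) (psc m n S pv ε k))
    (hs : tsupport (psc m n S pv ε k) ⊆ closedBall 0 1) (t : ℝ) (x : Sp m n) :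
    fderiv ℝ (Pblock m n S pv ε k y ν t) x
      = ∑ j, fderiv ℝ (per m n (psc m n S pv ε k)) (x - pair m n (y j) fun i => ν j i * t) := by
  have hper := (contDiff_per hp hs).differentiable (by simp)
  have hterm (j : Fin J) : DifferentiableAt ℝ
      (fun x => per m n (psc m n S pv ε k) (x - pair m n (y j) fun i => ν j i * t)) x :=
    (hper _).comp x (differentiableAt_id.sub_const _)
  unfold Pblock
  rw [fderiv_fun_sum fun j _ => hterm j]
  simp only [fderiv_comp_sub]

lemma diverg_ublock (hV : IsSteadyEulerBump 1 (vsc m n S v ε k) (psc m n S pv ε k))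
    (hχ : IsCutoff ρ χ) (hρ : 0 < ρ) (hρπ : 2 * ρ < π) (t : ℝ) (x : Sp m n) :
    diverg (ublock m n S v ε k y ν χ t) x = 0 := by
  rw [diverg_eq_trace, fderiv_ublock hV.contDiff_v hV.tsupport_v hχ hρ hρπ,
    ContinuousLinearMap.toLinearMap_add, ContinuousLinearMap.toLinearMap_sum, map_add, map_sum]
  simp only [← diverg_eq_trace, diverg_per hV, diverg_wblock hχ hρ hρπ, Finset.sum_const_zero,
    add_zero]

lemma hasDerivAt_ublock_time (hv : ContDiff ℝ (⊤ : ℕ∞) (vsc m n S v ε k))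
    (hs : tsupport (vsc m n S v ε k) ⊆ closedBall 0 1) (t : ℝ) (x : Sp m n) :
    HasDerivAt (fun s => ublock m n S v ε k y ν χ s x)
      (-∑ j, fderiv ℝ (per m n (vsc m n S v ε k)) (x - pair m n (y j) fun i => ν j i * t)
        (pair m n 0 fun i => ν j i)) t := by
  have hper := (contDiff_per hv hs).differentiable (by simp)
  rw [← Finset.sum_neg_distrib]
  refine (HasDerivAt.fun_sum fun j _ => ?_).add_const _
  rw [← map_neg]
  exact (hper _).hasFDerivAt.comp_hasDerivAt t
    ((hasDerivAt_pair_mul (y j) (fun i => ν j i) t).const_sub x)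


/-- Near each point, the `j`-th periodized bump is the single translate `vsc (z j)`; the
Euler identity is then checked on these translates. -/
lemma conv_add_grad_ublock (hV : IsSteadyEulerBump ρ (vsc m n S v ε k) (psc m n S pv ε k))
    (hχ : IsCutoff ρ χ) (hy : SeparatedOnTorus m (2 * ρ) y) (hρ : 0 < ρ) (hρ1 : ρ ≤ 1)
    (t : ℝ) (x : Sp m n) :
    conv (ublock m n S v ε k y ν χ t) (ublock m n S v ε k y ν χ t) x
        + grad (Pblock m n S pv ε k y ν t) x
      = ∑ j, fderiv ℝ (per m n (vsc m n S v ε k)) (x - pair m n (y j) fun i => ν j i * t)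
          (pair m n 0 fun i => ν j i) := by
  have hρπ : 2 * ρ < π := by linarith [pi_gt_three]
  have hV1 := hV.mono hρ1
  choose q hq using fun j : Fin J =>
    exists_forall_ne_two_lt_norm_add_lat (x - pair m n (y j) fun i => ν j i * t)
  set z : Fin J → Sp m n := fun j => x - pair m n (y j) (fun i => ν j i * t) + lat m n (q j)
  have hval (j : Fin J) : per m n (vsc m n S v ε k) (x - pair m n (y j) fun i => ν j i * t)
      = vsc m n S v ε k (z j) :=
    (per_eventuallyEq_comp_add_lat hV1.tsupport_v (hq j)).eq_of_nhds
  have hDv (j : Fin J) :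
      fderiv ℝ (per m n (vsc m n S v ε k)) (x - pair m n (y j) fun i => ν j i * t)
        = fderiv ℝ (vsc m n S v ε k) (z j) :=
    fderiv_per_eq hV1.tsupport_v (hq j)
  have hDp (j : Fin J) :
      fderiv ℝ (per m n (psc m n S pv ε k)) (x - pair m n (y j) fun i => ν j i * t)
        = fderiv ℝ (psc m n S pv ε k) (z j) :=
    fderiv_per_eq hV1.tsupport_p (hq j)
  have hz (j : Fin J) : distT m (fst' m n x) (y j) ≤ ‖z j‖ := 
    distT_fst'_le_norm x (pair m n (y j) fun i => ν j i * t) (q j)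
  have hu : ublock m n S v ε k y ν χ t x = ∑ j, vsc m n S v ε k (z j) + wblock m n y ν χ x := by
    simp only [ublock, hval]
  rw [conv_eq_fderiv_apply, fderiv_ublock hV1.contDiff_v hV1.tsupport_v hχ hρ hρπ,
    grad_eq_toDual_symm, fderiv_Pblock hV1.contDiff_p hV1.tsupport_p, hu]
  simp only [hDv, hDp, add_apply, sum_apply, map_sum, ← grad_eq_toDual_symm,
    fderiv_wblock_apply_sum_add_wblock hV hχ hy hρ hρπ hz, add_zero, ← Finset.sum_add_distrib]
  exact Finset.sum_congr rfl fun j _ => fderiv_apply_sum_add_wblock_add_grad hV hχ hy hρ hz j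

lemma hasDerivAt_ublock (hV : IsSteadyEulerBump ρ (vsc m n S v ε k) (psc m n S pv ε k))
    (hχ : IsCutoff ρ χ) (hy : SeparatedOnTorus m (2 * ρ) y) (hρ : 0 < ρ) (hρ1 : ρ ≤ 1)
    (t : ℝ) (x : Sp m n) :
    HasDerivAt (fun s => ublock m n S v ε k y ν χ s x)
      (-(conv (ublock m n S v ε k y ν χ t) (ublock m n S v ε k y ν χ t) x
        + grad (Pblock m n S pv ε k y ν t) x)) t := by
  rw [conv_add_grad_ublock hV hχ hy hρ hρ1]
  exact hasDerivAt_ublock_time (hV.mono hρ1).contDiff_v (hV.mono hρ1).tsupport_v t x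

end Block

theorem quasiperiodic_building_block_general
    (m n : ℕ)
    (v : Sp m n → Sp m n) (pv : Sp m n → ℝ)
    (hv : ContDiff ℝ (⊤ : ℕ∞) v) (hpv : ContDiff ℝ (⊤ : ℕ∞) pv)
    (hsv : tsupport v ⊆ Metric.closedBall 0 1)
    (hsp : tsupport pv ⊆ Metric.closedBall 0 1)
    (heuler : ∀ x, conv v v x + grad pv x = 0)
    (hdiv : ∀ x, diverg v x = 0)
    (S : ℕ) (ε : ℝ) (hε0 : 0 < ε) (hε1 : ε < 1) (k : ℕ)
    (J : ℕ) (y : Fin J → Fin m → ℝ)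
    (hy : ∀ j j' : Fin J, j ≠ j' → ∀ a : Fin m → ℝ,
      ¬(distT m a (y j) ≤ 2 * ε ^ k ∧ distT m a (y j') ≤ 2 * ε ^ k))
    (ν : Fin J → EuclideanSpace ℝ (Fin n))
    (χ : ℝ → ℝ) (hχs : ContDiff ℝ (⊤ : ℕ∞) χ)
    (hχ1 : ∀ r : ℝ, |r| < ε ^ k → χ r = 1)
    (hχ0 : ∀ r : ℝ, 2 * ε ^ k < |r| → χ r = 0) :
    let u : ℝ → Sp m n → Sp m n := ublock m n S v ε k y ν χ
    let P : ℝ → Sp m n → ℝ := Pblock m n S pv ε k y ν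
    (∀ t, ContDiff ℝ (⊤ : ℕ∞) (u t) ∧ ContDiff ℝ (⊤ : ℕ∞) (P t)) ∧
    (∀ t x q, u t (x + lat m n q) = u t x ∧ P t (x + lat m n q) = P t x) ∧
    (∀ t x, diverg (u t) x = 0) ∧
    (∀ t x, HasDerivAt (fun s => u s x) (-(conv (u t) (u t) x + grad (P t) x)) t) ∧
    (∀ t x, (∀ j : Fin J, 2 * ε ^ k < distT m (fst' m n x) (y j)) →
      u t x = wblock m n y ν χ x ∧ P t x = 0) := by
  intro u P
  have hρ : 0 < ε ^ k := pow_pos hε0 k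
  have hρ1 : ε ^ k ≤ 1 := pow_le_one₀ hε0.le hε1.le
  have hρπ : 2 * ε ^ k < π := by linarith [pi_gt_three]
  have hV : IsSteadyEulerBump (ε ^ k) (vsc m n S v ε k) (psc m n S pv ε k) :=
    isSteadyEulerBump_vsc_psc ⟨hv, hpv, hsv, hsp, heuler, hdiv⟩ hε0
  have hV1 := hV.mono hρ1
  have hχ : IsCutoff (ε ^ k) χ := ⟨hχs, hχ1, hχ0⟩
  have hfar {x : Sp m n} (h : ∀ j, 2 * ε ^ k < distT m (fst' m n x) (y j)) (j : Fin J) :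
      ε ^ k < distT m (fst' m n x) (y j) := by
    linarith [h j]
  exact ⟨fun t => ⟨contDiff_ublock hV1.contDiff_v hV1.tsupport_v hχ hρ hρπ t,
      contDiff_Pblock hV1.contDiff_p hV1.tsupport_p t⟩,
    fun t x q => ⟨ublock_add_lat t x q, Pblock_add_lat t x q⟩,
    diverg_ublock hV1 hχ hρ hρπ,
    hasDerivAt_ublock hV hχ hy hρ hρ1,
    fun t x h => ⟨ublock_eq_wblock hV.tsupport_v (hfar h), Pblock_eq_zero hV.tsupport_p (hfar h)⟩⟩

/-- the quasi-periodic building block of Enciso–Peralta-Salas–Torres de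
Lizaur, at scale `ε^k`: the field `u(t,x) = Σ_j v̄_j(t,x) + w(x)` with pressure
`P(t,x) = Σ_j p̄_j(t,x)` is smooth and `2πℤ^d`-periodic in `x`, divergence free, solves
`∂_t u + (u·∇)u + ∇P = 0`, and `u - w`, `P` are supported (mod `2πℤ^d`) in the union of the
cylinders `B̄(y_j, 2ε^k) × ℝ^{d-m}`. -/
theorem quasiperiodic_building_block
    (m n : ℕ) (hm : 1 ≤ m) (hn : 1 ≤ n)
    (v : Sp m n → Sp m n) (pv : Sp m n → ℝ)
    (hv : ContDiff ℝ (⊤ : ℕ∞) v) (hpv : ContDiff ℝ (⊤ : ℕ∞) pv)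
    (hsv : tsupport v ⊆ Metric.closedBall 0 1)
    (hsp : tsupport pv ⊆ Metric.closedBall 0 1)
    (heuler : ∀ x, conv v v x + grad pv x = 0)
    (hdiv : ∀ x, diverg v x = 0)
    (S : ℕ) (ε : ℝ) (hε0 : 0 < ε) (hε1 : ε < 1) (k : ℕ) (hk : 1 ≤ k)
    (J : ℕ) (hJ : 1 ≤ J) (y : Fin J → Fin m → ℝ)
    (hy : ∀ j j' : Fin J, j ≠ j' → ∀ a : Fin m → ℝ,
      ¬(distT m a (y j) ≤ 2 * ε ^ k ∧ distT m a (y j') ≤ 2 * ε ^ k))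
    (ν : Fin J → EuclideanSpace ℝ (Fin n))
    (χ : ℝ → ℝ) (hχs : ContDiff ℝ (⊤ : ℕ∞) χ) (hχe : ∀ r, χ (-r) = χ r)
    (hχm : ∀ r, χ r ∈ Set.Icc (0 : ℝ) 1)
    (hχ1 : ∀ r : ℝ, |r| < ε ^ k → χ r = 1)
    (hχ0 : ∀ r : ℝ, 2 * ε ^ k < |r| → χ r = 0) :
    let u : ℝ → Sp m n → Sp m n := ublock m n S v ε k y ν χ
    let P : ℝ → Sp m n → ℝ := Pblock m n S pv ε k y ν
    (∀ t, ContDiff ℝ (⊤ : ℕ∞) (u t) ∧ ContDiff ℝ (⊤ : ℕ∞) (P t)) ∧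
    (∀ t x q, u t (x + lat m n q) = u t x ∧ P t (x + lat m n q) = P t x) ∧
    (∀ t x, diverg (u t) x = 0) ∧
    (∀ t x, HasDerivAt (fun s => u s x) (-(conv (u t) (u t) x + grad (P t) x)) t) ∧
    (∀ t x, (∀ j : Fin J, 2 * ε ^ k < distT m (fst' m n x) (y j)) →
      u t x = wblock m n y ν χ x ∧ P t x = 0) :=
  quasiperiodic_building_block_general m n v pv hv hpv hsv hsp heuler hdiv S ε hε0 hε1 k J y hy ν χ
    hχs hχ1 hχ0
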